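/- arXiv:0707.2910 — 5 statements merged into one kernel-verified Lean document; each statement's English description precedes it below -/
import Mathlib

section
/- Let α, β : [0,∞) → (0,∞) be C¹ functions such that lim_{t→∞} (α'(t)/(α(t)β(t)) − β'(t)/β(t)²) = 0 and lim_{t→∞} (α(t)/β(t))·exp(∫₀^t β(s) ds) = +∞. Then ∫₀^t α(s)·exp(∫₀^s β(u) du) ds is asymptotically equivalent to (α(t)/β(t))·exp(∫₀^t β(s) ds) as t → ∞, i.e. the ratio of the two quantities tends to 1. -/
open Filter

noncomputable def Bf (β : ℝ → ℝ) (t : ℝ) : ℝ := ∫ s in (0:ℝ)..t, β s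
noncomputable def Ef (β : ℝ → ℝ) (t : ℝ) : ℝ := Real.exp (Bf β t)
noncomputable def Ff (α β : ℝ → ℝ) (t : ℝ) : ℝ := ∫ s in (0:ℝ)..t, α s * Ef β s
noncomputable def Gf (α β : ℝ → ℝ) (t : ℝ) : ℝ := α t / β t * Ef β t
noncomputable def epsf (α β : ℝ → ℝ) (t : ℝ) : ℝ :=
  deriv α t / (α t * β t) - deriv β t / (β t) ^ 2

/-- If `α'/(αβ) - β'/β² → 0` and `(α/β)·exp(∫₀ᵗ β) → ∞`, then
`∫₀ᵗ α(s)·exp(∫₀ˢ β) ds ∼ (α(t)/β(t))·exp(∫₀ᵗ β)` as `t → ∞`. -/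
theorem stmt1 (α β : ℝ → ℝ) (hα : ContDiff ℝ 1 α) (hβ : ContDiff ℝ 1 β)
    (hαpos : ∀ t ≥ (0:ℝ), 0 < α t) (hβpos : ∀ t ≥ (0:ℝ), 0 < β t)
    (h1 : Tendsto (fun t => deriv α t / (α t * β t) - deriv β t / (β t) ^ 2)
      atTop (nhds 0))
    (h2 : Tendsto (fun t => α t / β t * Real.exp (∫ s in (0:ℝ)..t, β s))
      atTop atTop) :
    Tendsto (fun t => (∫ s in (0:ℝ)..t, α s * Real.exp (∫ u in (0:ℝ)..s, β u)) /
      (α t / β t * Real.exp (∫ s in (0:ℝ)..t, β s))) atTop (nhds 1) := by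
  have hαc : Continuous α := hα.continuous
  have hβc : Continuous β := hβ.continuous
  have hα' : Continuous (deriv α) := hα.continuous_deriv le_rfl
  have hβ' : Continuous (deriv β) := hβ.continuous_deriv le_rfl
  have h1' : Tendsto (epsf α β) atTop (nhds 0) := h1
  have h2' : Tendsto (Gf α β) atTop atTop := h2
  -- basic derivatives
  have hB : ∀ t, HasDerivAt (Bf β) (β t) t := fun t =>
    intervalIntegral.integral_hasDerivAt_right (hβc.intervalIntegrable _ _)
      (hβc.stronglyMeasurableAtFilter _ _) hβc.continuousAt
  have hBc : Continuous (Bf β) := Differentiable.continuous fun t => (hB t).differentiableAt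
  have hEc : Continuous (Ef β) := Real.continuous_exp.comp hBc
  have hc1 : Continuous fun s => α s * Ef β s := hαc.mul hEc
  have hEpos : ∀ t, 0 < Ef β t := fun t => Real.exp_pos _
  have hGpos : ∀ t ≥ (0:ℝ), 0 < Gf α β t := fun t ht =>
    mul_pos (div_pos (hαpos t ht) (hβpos t ht)) (hEpos t)
  have hG : ∀ t ≥ (0:ℝ), HasDerivAt (Gf α β) ((epsf α β t + 1) * (α t * Ef β t)) t := by
    intro t ht
    have hβne : β t ≠ 0 := (hβpos t ht).ne'
    have hαne : α t ≠ 0 := (hαpos t ht).ne'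
    have hE : HasDerivAt (Ef β) (Ef β t * β t) t := (hB t).exp
    have hq : HasDerivAt (fun u => α u / β u)
        ((deriv α t * β t - α t * deriv β t) / (β t) ^ 2) t :=
      ((hα.differentiable one_ne_zero t).hasDerivAt).div
        ((hβ.differentiable one_ne_zero t).hasDerivAt) hβne
    have h := hq.mul hE
    refine h.congr_deriv ?_
    unfold epsf
    field_simp
  have hεcont : ContinuousOn (epsf α β) (Set.Ici 0) := by
    apply ContinuousOn.sub
    · exact hα'.continuousOn.div (hαc.continuousOn.mul hβc.continuousOn)
        fun x hx => (mul_pos (hαpos x hx) (hβpos x hx)).ne'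
    · exact hβ'.continuousOn.div (hβc.pow 2).continuousOn
        fun x hx => (pow_pos (hβpos x hx) 2).ne'
  have key : ∀ T ≥ (0:ℝ), ∀ t, T ≤ t →
      Gf α β t - Gf α β T = ∫ s in T..t, (epsf α β s + 1) * (α s * Ef β s) := by
    intro T hT t ht
    have hsub : Set.Icc T t ⊆ Set.Ici (0:ℝ) := fun x hx => le_trans hT hx.1
    rw [intervalIntegral.integral_eq_sub_of_hasDerivAt]
    · intro x hx
      rw [Set.uIcc_of_le ht] at hx
      exact hG x (hsub hx)
    · apply ContinuousOn.intervalIntegrable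
      rw [Set.uIcc_of_le ht]
      exact (((hεcont.mono hsub).add continuousOn_const).mul hc1.continuousOn)
  have keyF : ∀ T t : ℝ, Ff α β t - Ff α β T = ∫ s in T..t, α s * Ef β s := fun T t =>
    intervalIntegral.integral_interval_sub_left (hc1.intervalIntegrable 0 t)
      (hc1.intervalIntegrable 0 T)
  -- master eventual bound
  have master : ∀ δ : ℝ, 0 < δ → δ < 1 →
      ∀ᶠ t in atTop, (1 - δ) / (1 + δ) ≤ Ff α β t / Gf α β t ∧
        Ff α β t / Gf α β t ≤ 1 / (1 - δ) + δ := by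
    intro δ hδ0 hδ1
    have hev : ∀ᶠ s in atTop, |epsf α β s| ≤ δ ∧ 0 ≤ s := by
      filter_upwards [NormedAddCommGroup.tendsto_nhds_zero.mp h1' δ hδ0,
        eventually_ge_atTop (0:ℝ)] with s h1s h2s
      exact ⟨le_of_lt (by simpa using h1s), h2s⟩
    obtain ⟨T, hT⟩ := eventually_atTop.1 hev
    have hT0 : (0:ℝ) ≤ T := (hT T le_rfl).2
    have hGT : 0 < Gf α β T := hGpos T hT0
    have hFT : 0 ≤ Ff α β T := intervalIntegral.integral_nonneg hT0
      fun s hs => le_of_lt (mul_pos (hαpos s hs.1) (hEpos s))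
    filter_upwards [h2'.eventually_ge_atTop (max (Gf α β T / δ) (Ff α β T / δ)),
      eventually_ge_atTop T] with t hGt htT
    have hGtpos : 0 < Gf α β t :=
      lt_of_lt_of_le (div_pos hGT hδ0) (le_trans (le_max_left _ _) hGt)
    have hGTle : Gf α β T ≤ δ * Gf α β t := by
      have h := le_trans (le_max_left (Gf α β T / δ) (Ff α β T / δ)) hGt
      rw [div_le_iff₀ hδ0] at h; linarith
    have hFTle : Ff α β T ≤ δ * Gf α β t := by
      have h := le_trans (le_max_right (Gf α β T / δ) (Ff α β T / δ)) hGt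
      rw [div_le_iff₀ hδ0] at h; linarith
    set I : ℝ := ∫ s in T..t, α s * Ef β s with hIdef
    have hsub : Set.Icc T t ⊆ Set.Ici (0:ℝ) := fun x hx => le_trans hT0 hx.1
    have hI0 : 0 ≤ I := intervalIntegral.integral_nonneg htT
      fun s hs => le_of_lt (mul_pos (hαpos s (hsub hs)) (hEpos s))
    have hFt : Ff α β t = Ff α β T + I := by have := keyF T t; linarith
    have hint1 : IntervalIntegrable (fun s => α s * Ef β s) MeasureTheory.volume T t :=
      hc1.intervalIntegrable _ _
    have hεint : IntervalIntegrable (fun s => (epsf α β s + 1) * (α s * Ef β s))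
        MeasureTheory.volume T t := by
      apply ContinuousOn.intervalIntegrable
      rw [Set.uIcc_of_le htT]
      exact (((hεcont.mono hsub).add continuousOn_const).mul hc1.continuousOn)
    have hptwise : ∀ x ∈ Set.Icc T t, 0 ≤ α x * Ef β x ∧ |epsf α β x| ≤ δ := fun x hx =>
      ⟨le_of_lt (mul_pos (hαpos x (hsub hx)) (hEpos x)), (hT x hx.1).1⟩
    have hGub : Gf α β t - Gf α β T ≤ (1 + δ) * I := by
      rw [key T hT0 t htT, ← intervalIntegral.integral_const_mul]
      apply intervalIntegral.integral_mono_on htT hεint (hint1.const_mul _)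
      intro x hx
      obtain ⟨h0, habs⟩ := hptwise x hx
      have := abs_le.1 habs
      exact mul_le_mul_of_nonneg_right (by linarith [this.2]) h0
    have hGlb : (1 - δ) * I ≤ Gf α β t - Gf α β T := by
      rw [key T hT0 t htT, ← intervalIntegral.integral_const_mul]
      apply intervalIntegral.integral_mono_on htT (hint1.const_mul _) hεint
      intro x hx
      obtain ⟨h0, habs⟩ := hptwise x hx
      have := abs_le.1 habs
      exact mul_le_mul_of_nonneg_right (by linarith [this.1]) h0
    constructor
    · rw [div_le_div_iff₀ (by linarith) hGtpos]
      nlinarith [mul_nonneg hδ0.le hFT, mul_nonneg hδ0.le hI0]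
    · rw [div_le_iff₀ hGtpos]
      have h1δ : (0:ℝ) < 1 - δ := by linarith
      have hI : I ≤ Gf α β t / (1 - δ) := by
        rw [le_div_iff₀ h1δ]; nlinarith
      have hrw : (1 / (1 - δ)) * Gf α β t = Gf α β t / (1 - δ) := by ring
      linarith [hrw]
  -- conclude via order topology
  show Tendsto (fun t => Ff α β t / Gf α β t) atTop (nhds 1)
  refine tendsto_order.2 ⟨fun a ha => ?_, fun b hb => ?_⟩
  · set a' : ℝ := max a (1/2) with ha'def
    have ha'1 : a' < 1 := max_lt ha (by norm_num)
    have ha'h : (1/2 : ℝ) ≤ a' := le_max_right _ _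
    set δ : ℝ := (1 - a') / 2 with hδdef
    have h1a : (0:ℝ) < 1 - a' := by linarith
    have hδ0 : 0 < δ := by simp only [hδdef]; linarith
    have hδ1 : δ < 1 := by simp only [hδdef]; linarith
    filter_upwards [master δ hδ0 hδ1] with t hm
    have hlt : a' < (1 - δ) / (1 + δ) := by
      rw [lt_div_iff₀ (by simp only [hδdef]; linarith)]
      simp only [hδdef]
      nlinarith [mul_pos h1a h1a]
    exact lt_of_lt_of_le (lt_of_le_of_lt (le_max_left a _) hlt) hm.1
  · set δ : ℝ := min ((b - 1) / 4) (1/2) with hδdef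
    have hδb : δ ≤ (b - 1) / 4 := min_le_left _ _
    have hδh : δ ≤ 1/2 := min_le_right _ _
    have hδ0 : 0 < δ := lt_min (by linarith) (by norm_num)
    have hδ1 : δ < 1 := by linarith
    have h1δ : (0:ℝ) < 1 - δ := by linarith
    have hkey : 1 / (1 - δ) + δ < b := by
      have h2 : 1 / (1 - δ) ≤ 1 + 2 * δ := by
        rw [div_le_iff₀ h1δ]; nlinarith
      linarith
    filter_upwards [master δ hδ0 hδ1] with t hm
    exact lt_of_le_of_lt hm.2 hkey
end

section
/- Let g : [0,∞) → (0,∞) be continuous with lim_{t→∞} g(t) = ∞, let G(t) = ∫₀^t g(s) ds, and let G⁻¹(t) = inf{u ≥ 0 : G(u) ≥ t} be its generalized inverse. Then for every T > 0, G⁻¹(t+T) − G⁻¹(t) → 0 as t → ∞. -/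
open Filter Set

/-- If `g > 0` is continuous with `g(t) → ∞`, `G(t) = ∫₀ᵗ g` and `G⁻¹` is the
generalized inverse of `G`, then `G⁻¹(t+T) - G⁻¹(t) → 0` for every `T > 0`. -/
theorem stmt2 (g : ℝ → ℝ) (hg : Continuous g) (hgpos : ∀ t ≥ (0:ℝ), 0 < g t)
    (hginf : Tendsto g atTop atTop)
    (G Ginv : ℝ → ℝ) (hG : ∀ t, G t = ∫ s in (0:ℝ)..t, g s)
    (hGinv : ∀ t, Ginv t = sInf {u : ℝ | 0 ≤ u ∧ t ≤ G u}) :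
    ∀ T > (0:ℝ), Tendsto (fun t => Ginv (t + T) - Ginv t) atTop (nhds 0) := by
  intro T hT
  have hint : ∀ a b : ℝ, IntervalIntegrable g MeasureTheory.volume a b :=
    fun a b => hg.intervalIntegrable a b
  have hGsub : ∀ a b : ℝ, G b - G a = ∫ s in a..b, g s := by
    intro a b
    rw [hG, hG, intervalIntegral.integral_interval_sub_left (hint 0 b) (hint 0 a)]
  have hbound : ∀ (M a b : ℝ), a ≤ b → (∀ x ∈ Icc a b, M ≤ g x) →
      G a + M * (b - a) ≤ G b := by
    intro M a b hab h
    have h1 : ∫ _ in a..b, (M:ℝ) ≤ ∫ s in a..b, g s :=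
      intervalIntegral.integral_mono_on hab intervalIntegrable_const (hint a b) h
    rw [intervalIntegral.integral_const, smul_eq_mul] at h1
    have h2 := hGsub a b
    nlinarith
  have hmono : ∀ a b : ℝ, 0 ≤ a → a ≤ b → G a ≤ G b := by
    intro a b ha hab
    have := hbound 0 a b hab (fun x hx => (hgpos x (ha.trans hx.1)).le)
    linarith
  have hG0 : G 0 = 0 := by rw [hG]; simp
  have hGcont : Continuous G := by
    have : G = fun t => ∫ s in (0:ℝ)..t, g s := funext hG
    rw [this]
    exact intervalIntegral.continuous_primitive (fun a b => hint a b) 0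
  set S : ℝ → Set ℝ := fun t => {u : ℝ | 0 ≤ u ∧ t ≤ G u} with hS
  have hbdd : ∀ t, BddBelow (S t) := fun t => ⟨0, fun u hu => hu.1⟩
  have hne : ∀ t, (S t).Nonempty := by
    intro t
    obtain ⟨A, hA⟩ := eventually_atTop.1 (hginf.eventually (eventually_ge_atTop 1))
    set A' := max A 0 with hA'
    refine ⟨A' + max (t - G A') 0, ⟨by positivity, ?_⟩⟩
    have h1 : G A' + 1 * ((A' + max (t - G A') 0) - A') ≤ G (A' + max (t - G A') 0) := by
      apply hbound 1 A' _ (by simp [le_max_iff])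
      intro x hx
      exact hA x (le_trans (le_max_left A 0) hx.1)
    have := le_max_left (t - G A') 0
    nlinarith [le_max_left (t - G A') 0]
  have hclosed : ∀ t, IsClosed (S t) := by
    intro t
    have : S t = {u : ℝ | 0 ≤ u} ∩ G ⁻¹' (Ici t) := by
      ext u; simp [hS, Set.mem_setOf_eq, and_comm]
    rw [this]
    exact (isClosed_le continuous_const continuous_id).inter (isClosed_Ici.preimage hGcont)
  have hmem : ∀ t, Ginv t ∈ S t := by
    intro t
    rw [hGinv]
    exact (hclosed t).csInf_mem (hne t) (hbdd t)
  have hle : ∀ t u, u ∈ S t → Ginv t ≤ u := by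
    intro t u hu
    rw [hGinv]
    exact csInf_le (hbdd t) hu
  have hGG : ∀ t, 0 ≤ t → G (Ginv t) = t := by
    intro t ht
    have h1 := hmem t
    obtain ⟨u, hu, hGu⟩ := intermediate_value_Icc h1.1 hGcont.continuousOn
      (show t ∈ Icc (G 0) (G (Ginv t)) from ⟨by rw [hG0]; exact ht, h1.2⟩)
    have h2 : Ginv t ≤ u := hle t u ⟨hu.1, hGu.ge⟩
    have : u = Ginv t := le_antisymm hu.2 h2
    rw [← this, hGu]
  have hGinvmono : ∀ t t' : ℝ, t ≤ t' → Ginv t ≤ Ginv t' := by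
    intro t t' htt
    exact hle t _ ⟨(hmem t').1, htt.trans (hmem t').2⟩
  -- main argument
  rw [Metric.tendsto_atTop]
  intro ε hε
  set M : ℝ := 2 * T / ε with hM
  have hMpos : 0 < M := by positivity
  obtain ⟨A, hA⟩ := eventually_atTop.1 (hginf.eventually (eventually_ge_atTop M))
  set A' := max A 0 with hA'
  refine ⟨max (G A' + 1) 0, fun t ht => ?_⟩
  have ht0 : 0 ≤ t := le_trans (le_max_right _ 0) ht
  have htA : G A' < t := lt_of_lt_of_le (by linarith [le_max_left (G A' + 1) (0:ℝ)]) ht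
  -- Ginv t ≥ A'
  have hGinvA : A' ≤ Ginv t := by
    rw [hGinv]
    apply le_csInf (hne t)
    intro u hu
    by_contra hc
    push_neg at hc
    have : G u ≤ G A' := hmono u A' hu.1 hc.le
    linarith [hu.2]
  have hGt : G (Ginv t) = t := hGG t ht0
  have h0le : 0 ≤ Ginv t := (hmem t).1
  -- Ginv (t+T) ≤ Ginv t + ε/2
  have key : Ginv (t + T) ≤ Ginv t + ε / 2 := by
    apply hle
    refine ⟨by linarith, ?_⟩
    have hb : G (Ginv t) + M * ((Ginv t + ε / 2) - Ginv t) ≤ G (Ginv t + ε / 2) := by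
      apply hbound M _ _ (by linarith)
      intro x hx
      apply hA
      calc A ≤ A' := le_max_left A 0
        _ ≤ Ginv t := hGinvA
        _ ≤ x := hx.1
    have hMe : M * (ε / 2) = T := by
      rw [hM]; field_simp
    rw [hGt] at hb
    have : (Ginv t + ε / 2) - Ginv t = ε / 2 := by ring
    rw [this, hMe] at hb
    linarith
  have hmono2 : Ginv t ≤ Ginv (t + T) := hGinvmono t (t + T) (by linarith)
  rw [Real.dist_eq, sub_zero, abs_of_nonneg (by linarith)]
  linarith
end

section
/- Let α : [0,∞) → ℝ₊ be continuous, differentiable, satisfying α'(t) ≤ −c·α(t) + (C̃/2)·ε(t)² for constants c, C̃ > 0, where ε(t)² = k/log(t+2) for some k > 0. Then there exists a constant C₁ > 0 (independent of c) such that α(t) ≤ C₁·ε(t)²/c for all t sufficiently large. -/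
open Filter

/-- If `α' ≤ -c·α + (C̃/2)·ε²` with `ε(t)² = k/log(t+2)`, then there is a constant
`C₁ > 0`, independent of `c`, with `α(t) ≤ C₁·ε(t)²/c` for large `t`. -/
theorem stmt4 (k Ctil : ℝ) (hk : 0 < k) (hCtil : 0 < Ctil) :
    ∃ C₁ > (0:ℝ), ∀ c > (0:ℝ), ∀ α : ℝ → ℝ, Continuous α → Differentiable ℝ α →
      (∀ t ≥ (0:ℝ), 0 ≤ α t) →
      (∀ t ≥ (0:ℝ), deriv α t ≤ -c * α t + Ctil / 2 * (k / Real.log (t + 2))) →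
      ∃ T, ∀ t ≥ T, α t ≤ C₁ * (k / Real.log (t + 2)) / c := by
  refine ⟨Ctil, hCtil, ?_⟩
  intro c hc α hcont hdiff hpos hineq
  -- barrier function
  set m : ℝ → ℝ := fun t => Ctil * k / c * (Real.log (t + 2))⁻¹ with hm_def
  set g : ℝ → ℝ := fun t => α t - m t with hg_def
  have hlogpos : ∀ t : ℝ, 0 ≤ t → 0 < Real.log (t + 2) := by
    intro t ht; exact Real.log_pos (by linarith)
  -- derivative of g
  have hgderiv : ∀ t : ℝ, 0 ≤ t →
      HasDerivAt g (deriv α t + Ctil * k / c * ((t + 2)⁻¹ / Real.log (t + 2) ^ 2)) t := by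
    intro t ht
    have hne : t + 2 ≠ 0 := by linarith
    have h2 : HasDerivAt (fun s : ℝ => Real.log (s + 2)) (1 / (t + 2)) t := by
      simpa using (HasDerivAt.log ((hasDerivAt_id t).add_const 2) hne)
    have h3 : HasDerivAt (fun s : ℝ => (Real.log (s + 2))⁻¹)
        (-(1 / (t + 2)) / Real.log (t + 2) ^ 2) t := h2.inv (ne_of_gt (hlogpos t ht))
    have h4 := h3.const_mul (Ctil * k / c)
    have h5 := ((hdiff t).hasDerivAt).sub h4
    refine h5.congr_deriv ?_
    ring
  have hT₀ : (1:ℝ) ≤ max 1 (8 / c) := le_max_left _ _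
  set T₀ : ℝ := max 1 (8 / c) with hT₀_def
  have hT₀0 : (0:ℝ) ≤ T₀ := by linarith
  have hlog3 : (1:ℝ) ≤ Real.log 3 := by
    rw [Real.le_log_iff_exp_le (by norm_num)]
    calc Real.exp 1 ≤ 2.7182818286 := (Real.exp_one_lt_d9).le
    _ ≤ 3 := by norm_num
  -- key derivative bound where g ≥ 0
  have hkey : ∀ t : ℝ, T₀ ≤ t → 0 ≤ g t →
      deriv g t ≤ -(Ctil / 4) * (k / Real.log (t + 2)) := by
    intro t ht hgt
    have ht0 : (0:ℝ) ≤ t := le_trans hT₀0 ht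
    have hlp := hlogpos t ht0
    rw [(hgderiv t ht0).deriv]
    have hαm : m t ≤ α t := by simpa [hg_def] using hgt
    have h1 : deriv α t ≤ -c * m t + Ctil / 2 * (k / Real.log (t + 2)) := by
      have := hineq t ht0
      nlinarith [hαm, hc]
    have hmt : -c * m t = -(Ctil * k / Real.log (t + 2)) := by
      simp only [hm_def]
      field_simp
    -- bound the extra term: 1/(c*(t+2)*log(t+2)) ≤ 1/4
    have hct : 8 ≤ c * (t + 2) := by
      have h8 : 8 / c ≤ t := le_trans (le_max_right _ _) ht
      have h9 : 8 ≤ t * c := (div_le_iff₀ hc).mp h8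
      nlinarith
    have hlog1 : 1 ≤ Real.log (t + 2) := by
      have h1t : (1:ℝ) ≤ t := le_trans (le_max_left _ _) ht
      calc (1:ℝ) ≤ Real.log 3 := hlog3
      _ ≤ Real.log (t + 2) := Real.log_le_log (by norm_num) (by linarith)
    have hextra : Ctil * k / c * ((t + 2)⁻¹ / Real.log (t + 2) ^ 2) ≤
        Ctil / 4 * (k / Real.log (t + 2)) := by
      have hprod : (4:ℝ) ≤ c * (t + 2) * Real.log (t + 2) := by nlinarith
      have h14 : (c * (t + 2) * Real.log (t + 2))⁻¹ ≤ (4:ℝ)⁻¹ :=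
        inv_anti₀ (by norm_num) hprod
      have eL : Ctil * k / c * ((t + 2)⁻¹ / Real.log (t + 2) ^ 2)
          = Ctil * k / Real.log (t + 2) * (c * (t + 2) * Real.log (t + 2))⁻¹ := by
        field_simp
      have eR : Ctil / 4 * (k / Real.log (t + 2))
          = Ctil * k / Real.log (t + 2) * (4:ℝ)⁻¹ := by ring
      rw [eL, eR]
      exact mul_le_mul_of_nonneg_left h14 (by positivity)
    calc deriv α t + Ctil * k / c * ((t + 2)⁻¹ / Real.log (t + 2) ^ 2)
        ≤ (-(Ctil * k / Real.log (t + 2)) + Ctil / 2 * (k / Real.log (t + 2)))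
          + Ctil / 4 * (k / Real.log (t + 2)) := by
          have := h1; rw [hmt] at this; linarith
    _ = -(Ctil / 4) * (k / Real.log (t + 2)) := by ring
  have hgdiff : ∀ t : ℝ, 0 ≤ t → DifferentiableAt ℝ g t := fun t ht =>
    (hgderiv t ht).differentiableAt
  have hgcont : ContinuousOn g (Set.Ici 0) := fun t ht =>
    ((hgdiff t ht).continuousAt).continuousWithinAt
  -- Step 2: find t₀ ≥ T₀ with g t₀ ≤ 0
  have hstep2 : ∃ t₀, T₀ ≤ t₀ ∧ g t₀ ≤ 0 := by
    by_contra hno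
    push_neg at hno
    -- g > 0 on [T₀, ∞); pick a large t₁
    obtain ⟨A, hA1, hAg⟩ : ∃ A : ℝ, 1 ≤ A ∧ g T₀ ≤ Ctil / 4 * k * A := by
      refine ⟨max 1 (4 * g T₀ / (Ctil * k)), le_max_left _ _, ?_⟩
      have h4 : 4 * g T₀ / (Ctil * k) ≤ max 1 (4 * g T₀ / (Ctil * k)) := le_max_right _ _
      rw [div_le_iff₀ (by positivity)] at h4
      nlinarith
    -- choose t₁ with A * log (t₁+2) ≤ t₁ - T₀ and t₁ ≥ T₀
    obtain ⟨t₁, ht₁T, ht₁big⟩ : ∃ t₁, T₀ ≤ t₁ ∧ A * Real.log (t₁ + 2) ≤ t₁ - T₀ := by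
      have hev : ∀ᶠ x : ℝ in atTop, |Real.log x| ≤ (1 / (2 * A)) * |x| :=
        (Real.isLittleO_log_id_atTop).def (by positivity)
      have hcomp : Tendsto (fun t : ℝ => t + 2) atTop atTop :=
        tendsto_atTop_add_const_right _ 2 tendsto_id
      have hev2 := (hcomp.eventually hev).and
        (Filter.eventually_ge_atTop (max T₀ (2 * T₀ + 2)))
      obtain ⟨t₁, h1, h2⟩ := hev2.exists
      refine ⟨t₁, le_trans (le_max_left _ _) h2, ?_⟩
      have ht₁T : T₀ ≤ t₁ := le_trans (le_max_left _ _) h2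
      have ht₁2 : 2 * T₀ + 2 ≤ t₁ := le_trans (le_max_right _ _) h2
      have hpos2 : (0:ℝ) < t₁ + 2 := by linarith
      have hlogle : Real.log (t₁ + 2) ≤ (1 / (2 * A)) * (t₁ + 2) := by
        calc Real.log (t₁ + 2) ≤ |Real.log (t₁ + 2)| := le_abs_self _
        _ ≤ (1 / (2 * A)) * |t₁ + 2| := h1
        _ = (1 / (2 * A)) * (t₁ + 2) := by rw [abs_of_pos hpos2]
      have hApos : (0:ℝ) < A := by linarith
      calc A * Real.log (t₁ + 2) ≤ A * ((1 / (2 * A)) * (t₁ + 2)) := by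
            apply mul_le_mul_of_nonneg_left hlogle hApos.le
      _ = (t₁ + 2) / 2 := by field_simp
      _ ≤ t₁ - T₀ := by linarith
    -- antitone argument on [T₀, t₁]
    have hlp₁ := hlogpos t₁ (le_trans hT₀0 ht₁T)
    set D : ℝ := Ctil / 4 * (k / Real.log (t₁ + 2)) with hD_def
    have hDpos : 0 < D := by rw [hD_def]; positivity
    clear_value D
    have hanti : AntitoneOn (fun t => g t + D * t) (Set.Icc T₀ t₁) := by
      apply antitoneOn_of_deriv_nonpos (convex_Icc _ _)
      · apply ContinuousOn.add
        · exact hgcont.mono (fun x hx => le_trans hT₀0 hx.1)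
        · exact (continuous_const.mul continuous_id).continuousOn
      · intro x hx
        rw [interior_Icc] at hx
        exact ((hgdiff x (by linarith [hx.1, hT₀0])).add
          ((differentiableAt_id.const_mul D))).differentiableWithinAt
      · intro x hx
        rw [interior_Icc] at hx
        have hx0 : (0:ℝ) ≤ x := le_trans hT₀0 hx.1.le
        have hdg : deriv (fun t => g t + D * t) x = deriv g x + D := by
          have h := ((hgdiff x hx0).hasDerivAt).add ((hasDerivAt_id x).const_mul D)
          have h' := h.deriv
          simp only [mul_one] at h'
          exact h'
        rw [hdg]
        have hb := hkey x hx.1.le (le_of_lt (hno x hx.1.le))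
        have hlogmono : Real.log (x + 2) ≤ Real.log (t₁ + 2) :=
          Real.log_le_log (by linarith) (by linarith [hx.2])
        have hlpx := hlogpos x hx0
        have : D ≤ Ctil / 4 * (k / Real.log (x + 2)) := by
          rw [hD_def]
          gcongr
        linarith [hb, this]
    have h1 : g t₁ + D * t₁ ≤ g T₀ + D * T₀ :=
      hanti (Set.left_mem_Icc.2 ht₁T) (Set.right_mem_Icc.2 ht₁T) ht₁T
    have h2 : Ctil / 4 * k * A ≤ D * (t₁ - T₀) := by
      have e : D * (A * Real.log (t₁ + 2)) = Ctil / 4 * k * A := by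
        rw [hD_def]; field_simp
      calc Ctil / 4 * k * A = D * (A * Real.log (t₁ + 2)) := e.symm
      _ ≤ D * (t₁ - T₀) := mul_le_mul_of_nonneg_left ht₁big hDpos.le
    have h3 : D * (t₁ - T₀) = D * t₁ - D * T₀ := by ring
    have h5 := hno t₁ ht₁T
    clear_value g m T₀
    linarith
  obtain ⟨t₀, ht₀T, hgt₀⟩ := hstep2
  -- Step 3: invariance — g stays ≤ 0 after t₀
  refine ⟨t₀, ?_⟩
  intro t ht
  have hgle : g t ≤ 0 := by
    rcases eq_or_lt_of_le ht with rfl | hlt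
    · exact hgt₀
    by_contra hgt
    push_neg at hgt
    set S : Set ℝ := {u ∈ Set.Icc t₀ t | g u ≤ 0} with hS_def
    have hSne : S.Nonempty := ⟨t₀, ⟨Set.left_mem_Icc.2 ht, hgt₀⟩⟩
    have hsub : Set.Icc t₀ t ⊆ Set.Ici (0:ℝ) := fun x hx =>
      le_trans (le_trans hT₀0 ht₀T) hx.1
    have hSeq : S = Set.Icc t₀ t ∩ g ⁻¹' Set.Iic 0 := by
      ext u; simp [hS_def, Set.mem_Icc, and_assoc]
    have hScl : IsClosed S := by
      rw [hSeq]
      exact (hgcont.mono hsub).preimage_isClosed_of_isClosed isClosed_Icc isClosed_Iic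
    have hScomp : IsCompact S := (isCompact_Icc).of_isClosed_subset hScl
      (fun u hu => hu.1)
    set s : ℝ := sSup S with hs_def
    have hsS : s ∈ S := hScomp.sSup_mem hSne
    have hst : s < t := lt_of_le_of_ne hsS.1.2 (fun h => by
      rw [h] at hsS; linarith [hsS.2])
    have hgu : ∀ u, s < u → u ≤ t → 0 < g u := by
      intro u hsu hut
      by_contra hgu
      push_neg at hgu
      have huS : u ∈ S := ⟨⟨le_trans hsS.1.1 hsu.le, hut⟩, hgu⟩
      have : u ≤ s := le_csSup hScomp.bddAbove huS
      linarith
    have hanti : AntitoneOn g (Set.Icc s t) := by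
      apply antitoneOn_of_deriv_nonpos (convex_Icc _ _)
      · exact hgcont.mono (fun x hx => hsub ⟨le_trans hsS.1.1 hx.1, hx.2⟩)
      · intro x hx
        rw [interior_Icc] at hx
        exact (hgdiff x (le_trans (le_trans hT₀0 (le_trans ht₀T hsS.1.1)) hx.1.le)
          ).differentiableWithinAt
      · intro x hx
        rw [interior_Icc] at hx
        have hxT : T₀ ≤ x := le_trans (le_trans ht₀T hsS.1.1) hx.1.le
        have hx0 : (0:ℝ) ≤ x := le_trans hT₀0 hxT
        have hb := hkey x hxT (hgu x hx.1 hx.2.le).le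
        have hlpx := hlogpos x hx0
        have : (0:ℝ) ≤ Ctil / 4 * (k / Real.log (x + 2)) := by positivity
        linarith
    have := hanti (Set.left_mem_Icc.2 hsS.1.2) (Set.right_mem_Icc.2 hsS.1.2) hsS.1.2
    linarith [hsS.2]
  simp only [hg_def, hm_def] at hgle
  have : α t ≤ Ctil * k / c * (Real.log (t + 2))⁻¹ := by linarith
  calc α t ≤ Ctil * k / c * (Real.log (t + 2))⁻¹ := this
  _ = Ctil * (k / Real.log (t + 2)) / c := by ring
end

section
/- Let g : [0,∞) → (0,∞) be continuous, G(t) = ∫₀^t g(s) ds, and suppose there exist constants 0 < m ≤ M such that m·g(t) ≤ log G(t) ≤ M·g(t) for all large t. Then g(t) = O(log t) and G(t) = o(t²) as t → ∞. -/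
open Filter

/-- If `m·g(t) ≤ log G(t) ≤ M·g(t)` for large `t`, where `G(t) = ∫₀ᵗ g`, then
`g(t) = O(log t)` and `G(t) = o(t²)`. -/
theorem stmt11 (g : ℝ → ℝ) (hg : Continuous g) (hgpos : ∀ t, 0 < g t)
    (G : ℝ → ℝ) (hG : ∀ t, G t = ∫ s in (0:ℝ)..t, g s)
    (m M T₀ : ℝ) (hm : 0 < m) (hmM : m ≤ M)
    (hbound : ∀ t ≥ T₀, m * g t ≤ Real.log (G t) ∧ Real.log (G t) ≤ M * g t) :
    (∃ C T₁, ∀ t ≥ T₁, g t ≤ C * Real.log t) ∧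
      Tendsto (fun t => G t / t ^ 2) atTop (nhds 0) := by
  have hint : ∀ a b : ℝ, IntervalIntegrable g MeasureTheory.volume a b :=
    fun a b => hg.intervalIntegrable a b
  have hGsub : ∀ a b : ℝ, G b - G a = ∫ s in a..b, g s := by
    intro a b
    have h := intervalIntegral.integral_add_adjacent_intervals (hint 0 a) (hint a b)
    rw [hG a, hG b]; linarith
  have hGmono : ∀ a b : ℝ, a ≤ b → G a ≤ G b := by
    intro a b hab
    have h1 : 0 ≤ ∫ s in a..b, g s :=
      intervalIntegral.integral_nonneg hab (fun x _ => (hgpos x).le)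
    have h2 := hGsub a b; linarith
  have hGposN : ∀ t : ℝ, 0 < t → 0 < G t := by
    intro t ht
    rw [hG t]
    exact intervalIntegral.intervalIntegral_pos_of_pos_on (hint 0 t)
      (fun x _ => hgpos x) ht
  set T₁ : ℝ := max T₀ 1 with hT₁def
  have hT₁1 : (1:ℝ) ≤ T₁ := le_max_right _ _
  have hT₁0 : (0:ℝ) < T₁ := lt_of_lt_of_le one_pos hT₁1
  set A : ℝ := G T₁ with hAdef
  have hA0 : 0 < A := hGposN T₁ hT₁0
  have hGt_pos : ∀ t, T₁ ≤ t → 0 < G t := fun t ht => hGposN t (lt_of_lt_of_le hT₁0 ht)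
  have hlogpos : ∀ t, T₁ ≤ t → 0 < Real.log (G t) := by
    intro t ht
    have h1 := (hbound t (le_trans (le_max_left T₀ 1) ht)).1
    have h2 : 0 < m * g t := mul_pos hm (hgpos t)
    linarith
  -- key integral inequality : G t ≤ A + t * (log (G t) / m)
  have key : ∀ t, T₁ ≤ t → G t ≤ A + t * (Real.log (G t) / m) := by
    intro t ht
    have hlt : ∀ s ∈ Set.Icc T₁ t, g s ≤ Real.log (G t) / m := by
      intro s hs
      have hsT₀ : T₀ ≤ s := le_trans (le_max_left T₀ 1) hs.1
      have h1 : m * g s ≤ Real.log (G s) := (hbound s hsT₀).1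
      have h2 : Real.log (G s) ≤ Real.log (G t) :=
        Real.log_le_log (hGt_pos s hs.1) (hGmono s t hs.2)
      rw [le_div_iff₀ hm]
      nlinarith
    have hmono := intervalIntegral.integral_mono_on ht (hint T₁ t)
      (intervalIntegrable_const) hlt
    rw [intervalIntegral.integral_const] at hmono
    have hsub := hGsub T₁ t
    have hLpos := hlogpos t ht
    have hq : 0 ≤ Real.log (G t) / m := by positivity
    have h3 : (t - T₁) * (Real.log (G t) / m) ≤ t * (Real.log (G t) / m) :=
      mul_le_mul_of_nonneg_right (by linarith) hq
    simp only [smul_eq_mul] at hmono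
    nlinarith
  -- quadratic bound via sqrt
  have hsq : ∀ t, T₁ ≤ t → Real.sqrt (G t) ≤ Real.sqrt A + 2 * t / m := by
    intro t ht
    have ht0 : 0 < t := lt_of_lt_of_le hT₁0 ht
    set u : ℝ := Real.sqrt (G t) with hudef
    have hu0 : 0 ≤ u := Real.sqrt_nonneg _
    have hu2 : u ^ 2 = G t := Real.sq_sqrt (hGt_pos t ht).le
    have hlogu : Real.log (G t) ≤ 2 * u := by
      have h1 : Real.log u ≤ u - 1 := Real.log_le_sub_one_of_pos
        (Real.sqrt_pos.mpr (hGt_pos t ht))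
      have h2 : Real.log u = Real.log (G t) / 2 := Real.log_sqrt (hGt_pos t ht).le
      linarith
    have hk := key t ht
    have he : m * (A + t * (Real.log (G t) / m)) = m * A + t * Real.log (G t) := by
      field_simp
    have hkm : m * G t ≤ m * A + t * Real.log (G t) := by
      have h4 := mul_le_mul_of_nonneg_left hk hm.le
      linarith
    have hGu : m * u ^ 2 ≤ m * A + 2 * t * u := by
      have h5 : t * Real.log (G t) ≤ t * (2 * u) :=
        mul_le_mul_of_nonneg_left hlogu ht0.le
      nlinarith
    have hsA : Real.sqrt A ^ 2 = A := Real.sq_sqrt hA0.le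
    have hsA0 : 0 ≤ Real.sqrt A := Real.sqrt_nonneg _
    have hupos : 0 < u := Real.sqrt_pos.mpr (hGt_pos t ht)
    have hmu : m * u ≤ m * Real.sqrt A + 2 * t := by
      nlinarith [hGu, hupos, hsA0, hsA, mul_nonneg ht0.le hsA0, mul_pos hm hupos,
        mul_nonneg hu0 hsA0]
    have hfin : m * (Real.sqrt A + 2 * t / m) = m * Real.sqrt A + 2 * t := by
      field_simp
    exact (mul_le_mul_iff_right₀ hm).mp (by linarith)
  -- polynomial bound
  set T₂ : ℝ := max T₁ (m * Real.sqrt A) with hT₂def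
  have hT₂₁ : T₁ ≤ T₂ := le_max_left _ _
  have hpoly : ∀ t, T₂ ≤ t → G t ≤ 9 / m ^ 2 * t ^ 2 := by
    intro t ht
    have ht1 : T₁ ≤ t := le_trans hT₂₁ ht
    have ht0 : 0 < t := lt_of_lt_of_le hT₁0 ht1
    have hsA : Real.sqrt A ≤ t / m := by
      rw [le_div_iff₀ hm]
      have : m * Real.sqrt A ≤ t := le_trans (le_max_right T₁ _) ht
      linarith [this]
    have h1 : Real.sqrt (G t) ≤ 3 * t / m := by
      have := hsq t ht1
      have h2 : Real.sqrt A + 2 * t / m ≤ 3 * t / m := by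
        have he : t / m + 2 * t / m = 3 * t / m := by ring
        linarith
      linarith
    have hu2 : Real.sqrt (G t) ^ 2 = G t := Real.sq_sqrt (hGt_pos t ht1).le
    have h3 : Real.sqrt (G t) ^ 2 ≤ (3 * t / m) ^ 2 :=
      pow_le_pow_left₀ (Real.sqrt_nonneg _) h1 2
    have he2 : (3 * t / m) ^ 2 = 9 / m ^ 2 * t ^ 2 := by
      field_simp; ring
    linarith [he2 ▸ h3, hu2 ▸ h3]
  -- logarithmic bound on log (G t)
  set c : ℝ := Real.log (9 / m ^ 2) with hcdef
  set T₃ : ℝ := max T₂ (Real.exp (|c| + 1)) with hT₃def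
  have hT₃₂ : T₂ ≤ T₃ := le_max_left _ _
  have hT₃₁ : T₁ ≤ T₃ := le_trans hT₂₁ hT₃₂
  have hlog3 : ∀ t, T₃ ≤ t → Real.log (G t) ≤ 3 * Real.log t ∧ 1 ≤ Real.log t := by
    intro t ht
    have ht1 : T₁ ≤ t := le_trans hT₃₁ ht
    have ht0 : 0 < t := lt_of_lt_of_le hT₁0 ht1
    have hexp : Real.exp (|c| + 1) ≤ t := le_trans (le_max_right T₂ _) ht
    have hlt : |c| + 1 ≤ Real.log t := by
      have := Real.log_le_log (Real.exp_pos _) hexp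
      rwa [Real.log_exp] at this
    have h9 : (0:ℝ) < 9 / m ^ 2 := by positivity
    have h1 : Real.log (G t) ≤ Real.log (9 / m ^ 2 * t ^ 2) :=
      Real.log_le_log (hGt_pos t ht1) (hpoly t (le_trans hT₃₂ ht))
    have h2 : Real.log (9 / m ^ 2 * t ^ 2) = c + 2 * Real.log t := by
      rw [Real.log_mul h9.ne' (by positivity), Real.log_pow]
      push_cast; ring
    have habs : c ≤ |c| := le_abs_self c
    constructor
    · rw [h2] at h1; linarith
    · linarith [abs_nonneg c]
  constructor
  · -- g = O(log t)
    refine ⟨3 / m, T₃, fun t ht => ?_⟩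
    have h1 := (hbound t (le_trans (le_max_left T₀ 1) (le_trans hT₃₁ ht))).1
    have h2 := (hlog3 t ht).1
    have he : m * (3 / m * Real.log t) = 3 * Real.log t := by field_simp
    exact (mul_le_mul_iff_right₀ hm).mp (by linarith)
  · -- G = o(t²)
    have tA : Tendsto (fun t : ℝ => A / t ^ 2) atTop (nhds 0) :=
      tendsto_const_nhds.div_atTop (tendsto_pow_atTop two_ne_zero)
    have tlog : Tendsto (fun t : ℝ => Real.log t / t) atTop (nhds 0) :=
      Real.isLittleO_log_id_atTop.tendsto_div_nhds_zero
    have tU : Tendsto (fun t : ℝ => A / t ^ 2 + 3 / m * (Real.log t / t)) atTop (nhds 0) := by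
      have := tA.add (tlog.const_mul (3 / m))
      simpa using this
    apply tendsto_of_tendsto_of_tendsto_of_le_of_le' tendsto_const_nhds tU
    · filter_upwards [eventually_ge_atTop T₁] with t ht
      exact div_nonneg (hGt_pos t ht).le (sq_nonneg t)
    · filter_upwards [eventually_ge_atTop T₃] with t ht
      have ht1 : T₁ ≤ t := le_trans hT₃₁ ht
      have ht0 : 0 < t := lt_of_lt_of_le hT₁0 ht1
      have h1 := key t ht1
      have h2 := (hlog3 t ht).1
      have hq : Real.log (G t) / m ≤ 3 * Real.log t / m := by gcongr
      have h3 : G t ≤ A + t * (3 * Real.log t / m) := by nlinarith [mul_le_mul_of_nonneg_left hq ht0.le]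
      have h4 : G t / t ^ 2 ≤ (A + t * (3 * Real.log t / m)) / t ^ 2 := by gcongr
      have he : (A + t * (3 * Real.log t / m)) / t ^ 2
          = A / t ^ 2 + 3 / m * (Real.log t / t) := by
        field_simp
      linarith
end

section
/- Let m : (0,∞) → ℝ^d be a measurable bounded path with m(t) → γ̄ as t → ∞, and r > 0. Define μ̄(t) = μ̄₀ + (t/(r+t))·m(t) + ∫₀^t (s/(r+s)²)·m(s) ds. If γ̄ = 0 and additionally |m(t) − γ̄| = O(1/t), then μ̄(t) converges as t → ∞. If γ̄ ≠ 0, then μ̄(t)/log t → γ̄ as t → ∞ (in particular μ̄(t) diverges). -/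
open Filter MeasureTheory Set Topology

private lemma auxF_deriv (r : ℝ) (s : ℝ) (hs : 0 < r + s) :
    HasDerivAt (fun u => Real.log (r+u) + r/(r+u)) (s/(r+s)^2) s := by
  have h1 : HasDerivAt (fun u : ℝ => r + u) 1 s := (hasDerivAt_id s).const_add r
  have h2 : HasDerivAt (fun u => Real.log (r+u)) (1/(r+s)) s := by
    simpa using h1.log hs.ne'
  have h3 : HasDerivAt (fun u => r/(r+u)) (r * (-1/(r+s)^2)) s := by
    simpa [div_eq_mul_inv] using (h1.inv hs.ne').const_mul r
  refine (h2.add h3).congr_deriv ?_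
  have := hs.ne'
  field_simp
  ring

private lemma aux_ii {d : ℕ} (r : ℝ) (hr : 0 < r) (w : ℝ → EuclideanSpace ℝ (Fin d))
    (hw : Measurable w) (Cb : ℝ) (hCb : ∀ t, ‖w t‖ ≤ Cb) (a b : ℝ) (ha : 0 ≤ a) (hb : 0 ≤ b) :
    IntervalIntegrable (fun s => (s/(r+s)^2) • w s) volume a b := by
  have hCb0 : 0 ≤ Cb := le_trans (norm_nonneg _) (hCb 0)
  rw [intervalIntegrable_iff]
  refine Integrable.mono' ((integrableOn_const_iff (C := Cb/r)).mpr (Or.inr measure_Ioc_lt_top)) ?_ ?_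
  · exact ((measurable_id.div
      ((measurable_const.add measurable_id).pow_const 2)).smul hw).aestronglyMeasurable
  · filter_upwards [ae_restrict_mem measurableSet_uIoc] with s hs
    have hs0 : 0 < s := lt_of_le_of_lt (le_min ha hb) hs.1
    have hrs : 0 < r + s := by linarith
    have hf1 : (0:ℝ) ≤ s/(r+s)^2 := by positivity
    have hf2 : s/(r+s)^2 ≤ 1/r := by
      rw [div_le_div_iff₀ (by positivity) hr]; nlinarith
    calc ‖(s/(r+s)^2) • w s‖ = (s/(r+s)^2) * ‖w s‖ := by
          rw [norm_smul, Real.norm_eq_abs, abs_of_nonneg hf1]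
      _ ≤ (1/r) * Cb := mul_le_mul hf2 (hCb s) (norm_nonneg _) (by positivity)
      _ = Cb / r := by ring

set_option maxHeartbeats 1000000 in
/-- Asymptotics of `μ̄(t) = μ̄₀ + (t/(r+t))·m(t) + ∫₀ᵗ (s/(r+s)²)·m(s) ds` when
`m(t) → γ̄`: if `γ̄ = 0` (and `m(t) - γ̄ = O(1/t)`) then `μ̄` converges; if `γ̄ ≠ 0`
then `μ̄(t)/log t → γ̄`. -/
theorem stmt16 {d : ℕ} (m : ℝ → EuclideanSpace ℝ (Fin d)) (hm : Measurable m)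
    (hbd : ∃ C, ∀ t, ‖m t‖ ≤ C)
    (γ : EuclideanSpace ℝ (Fin d)) (hlim : Tendsto m atTop (nhds γ))
    (r : ℝ) (hr : 0 < r) (μ0 : EuclideanSpace ℝ (Fin d))
    (μ : ℝ → EuclideanSpace ℝ (Fin d))
    (hμ : ∀ t, μ t = μ0 + (t/(r+t)) • m t + ∫ s in (0:ℝ)..t, (s/(r+s)^2) • m s) :
    (γ = 0 → (∃ C T, ∀ t ≥ T, ‖m t - γ‖ ≤ C / t) →
      ∃ L, Tendsto μ atTop (nhds L)) ∧
    (γ ≠ 0 → Tendsto (fun t => (Real.log t)⁻¹ • μ t) atTop (nhds γ)) := by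
  obtain ⟨Cb, hCb⟩ := hbd
  have hCb0 : 0 ≤ Cb := le_trans (norm_nonneg _) (hCb 0)
  have hfrac : Tendsto (fun t => t/(r+t)) atTop (𝓝 1) := by
    have h0 : Tendsto (fun t : ℝ => r/(r+t)) atTop (𝓝 0) :=
      Tendsto.div_atTop tendsto_const_nhds (tendsto_atTop_add_const_left _ r tendsto_id)
    have h1 : Tendsto (fun t : ℝ => 1 - r/(r+t)) atTop (𝓝 1) := by
      simpa using tendsto_const_nhds.sub h0
    apply h1.congr'
    filter_upwards [eventually_gt_atTop 0] with t ht
    have : r + t ≠ 0 := by positivity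
    field_simp
    ring
  have hloginv : Tendsto (fun t => (Real.log t)⁻¹) atTop (𝓝 (0:ℝ)) :=
    Real.tendsto_log_atTop.inv_tendsto_atTop
  have hgm : Measurable (fun s => (s/(r+s)^2) • m s) :=
    (measurable_id.div ((measurable_const.add measurable_id).pow_const 2)).smul hm
  constructor
  · rintro rfl ⟨C, T, hC⟩
    simp only [sub_zero] at hC
    set T' := max T 1 with hT'def
    have hT'1 : (1:ℝ) ≤ T' := le_max_right _ _
    have hT'T : T ≤ T' := le_max_left _ _
    have hT'0 : (0:ℝ) < T' := by linarith
    have hC0 : 0 ≤ C := by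
      have h2 : 0 ≤ C / T' := le_trans (norm_nonneg _) (hC T' hT'T)
      have := mul_nonneg h2 hT'0.le
      rwa [div_mul_cancel₀ _ hT'0.ne'] at this
    set D := max (T' * Cb) C with hDdef
    have hD0 : 0 ≤ D := le_trans hC0 (le_max_right _ _)
    have hDint : IntegrableOn (fun s => D/(r+s)^2) (Ioi (0:ℝ)) volume := by
      have hderiv : ∀ x ∈ Ici (0:ℝ), HasDerivAt (fun s => -(D*(r+s)⁻¹)) (D/(r+x)^2) x := by
        intro x hx
        have hrx : 0 < r + x := by have : (0:ℝ) ≤ x := hx; linarith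
        have h1 : HasDerivAt (fun u : ℝ => r + u) 1 x := (hasDerivAt_id x).const_add r
        have h2 := ((h1.inv hrx.ne').const_mul D).neg
        refine h2.congr_deriv ?_
        ring
      have htend : Tendsto (fun s : ℝ => -(D*(r+s)⁻¹)) atTop (𝓝 0) := by
        have h3 : Tendsto (fun s : ℝ => (r+s)⁻¹) atTop (𝓝 0) :=
          (tendsto_atTop_add_const_left _ r tendsto_id).inv_tendsto_atTop
        simpa using (h3.const_mul D).neg
      exact integrableOn_Ioi_deriv_of_nonneg' hderiv
        (fun x _ => div_nonneg hD0 (sq_nonneg _)) htend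
    have hgint : IntegrableOn (fun s => (s/(r+s)^2) • m s) (Ioi (0:ℝ)) volume := by
      refine hDint.mono' hgm.aestronglyMeasurable ?_
      filter_upwards [ae_restrict_mem measurableSet_Ioi] with s hs
      have hs0 : (0:ℝ) < s := hs
      have hrs : 0 < r + s := by linarith
      have habs : ‖(s/(r+s)^2) • m s‖ = (s/(r+s)^2) * ‖m s‖ := by
        rw [norm_smul, Real.norm_eq_abs, abs_of_nonneg (by positivity)]
      rw [habs]
      rcases le_total s T' with h | h
      · calc (s/(r+s)^2) * ‖m s‖ ≤ (s/(r+s)^2) * Cb :=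
              mul_le_mul_of_nonneg_left (hCb s) (by positivity)
          _ = (s * Cb)/(r+s)^2 := by ring
          _ ≤ D/(r+s)^2 := by
              refine (div_le_div_iff_of_pos_right (pow_pos hrs 2)).mpr ?_
              nlinarith [le_max_left (T' * Cb) C, mul_le_mul_of_nonneg_right h hCb0]
      · have h1 : ‖m s‖ ≤ C/s := hC s (le_trans hT'T h)
        calc (s/(r+s)^2) * ‖m s‖ ≤ (s/(r+s)^2) * (C/s) :=
              mul_le_mul_of_nonneg_left h1 (by positivity)
          _ = C/(r+s)^2 := by field_simp
          _ ≤ D/(r+s)^2 :=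
              (div_le_div_iff_of_pos_right (pow_pos hrs 2)).mpr (le_max_right _ _)
    have hInt : Tendsto (fun t => ∫ s in (0:ℝ)..t, (s/(r+s)^2) • m s) atTop
        (𝓝 (∫ s in Ioi (0:ℝ), (s/(r+s)^2) • m s)) :=
      intervalIntegral_tendsto_integral_Ioi 0 hgint tendsto_id
    refine ⟨μ0 + (1:ℝ) • (0:EuclideanSpace ℝ (Fin d)) + ∫ s in Ioi (0:ℝ), (s/(r+s)^2) • m s, ?_⟩
    exact Tendsto.congr (fun t => (hμ t).symm) ((tendsto_const_nhds.add (hfrac.smul hlim)).add hInt)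
  · intro hγ
    set F : ℝ → ℝ := fun t => Real.log (r+t) + r/(r+t) with hFdef
    set E : ℝ → EuclideanSpace ℝ (Fin d) :=
      fun t => ∫ s in (0:ℝ)..t, (s/(r+s)^2) • (m s - γ) with hEdef
    have hfcOn : ContinuousOn (fun s : ℝ => s/(r+s)^2) (Ici 0) := by
      apply ContinuousOn.div continuousOn_id
        (((continuous_const.add continuous_id).pow 2).continuousOn)
      intro x hx
      have hx0 : (0:ℝ) ≤ x := hx
      exact (pow_pos (show 0 < r + x by linarith) 2).ne'
    have hfii : ∀ a b : ℝ, 0 ≤ a → 0 ≤ b → IntervalIntegrable (fun s : ℝ => s/(r+s)^2) volume a b := by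
      intro a b ha hb
      apply ContinuousOn.intervalIntegrable
      apply hfcOn.mono
      intro x hx
      exact le_trans (le_min ha hb) hx.1
    have hA : ∀ a b : ℝ, 0 ≤ a → a ≤ b → (∫ s in a..b, s/(r+s)^2) = F b - F a := by
      intro a b ha hab
      apply intervalIntegral.integral_eq_sub_of_hasDerivAt
      · intro x hx
        have hx0 : 0 ≤ x := le_trans (le_min ha (le_trans ha hab)) hx.1
        exact auxF_deriv r x (by linarith)
      · exact hfii a b ha (le_trans ha hab)
    have hAnn : ∀ a b : ℝ, 0 ≤ a → a ≤ b → 0 ≤ F b - F a := by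
      intro a b ha hab
      rw [← hA a b ha hab]
      apply intervalIntegral.integral_nonneg hab
      intro u hu
      have : 0 ≤ u := le_trans ha hu.1
      positivity
    have hlogA : Tendsto (fun t => (Real.log t)⁻¹ * (F t - F 0)) atTop (𝓝 1) := by
      have h1 : Tendsto (fun t => Real.log (r+t) - Real.log t) atTop (𝓝 0) := by
        have h2 : Tendsto (fun t : ℝ => (r+t)/t) atTop (𝓝 1) := by
          have h3 : Tendsto (fun t : ℝ => r/t + 1) atTop (𝓝 1) := by
            simpa using (Tendsto.div_atTop (tendsto_const_nhds (x := r)) tendsto_id).add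
              (tendsto_const_nhds (x := (1:ℝ)))
          apply h3.congr'
          filter_upwards [eventually_gt_atTop 0] with t ht
          field_simp
        have h4 := h2.log one_ne_zero
        rw [Real.log_one] at h4
        apply h4.congr'
        filter_upwards [eventually_gt_atTop 0] with t ht
        rw [Real.log_div (by linarith) ht.ne']
      have h4 : Tendsto (fun t : ℝ => r/(r+t)) atTop (𝓝 0) :=
        Tendsto.div_atTop tendsto_const_nhds (tendsto_atTop_add_const_left _ r tendsto_id)
      have h5 : Tendsto
          (fun t => 1 + (Real.log t)⁻¹ * ((Real.log (r+t) - Real.log t) + r/(r+t) - F 0))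
          atTop (𝓝 (1 + 0 * ((0 : ℝ) + 0 - F 0))) :=
        tendsto_const_nhds.add (hloginv.mul ((h1.add h4).sub_const (F 0)))
      rw [show (1 + 0 * ((0:ℝ) + 0 - F 0)) = 1 by ring] at h5
      apply h5.congr'
      filter_upwards [eventually_gt_atTop 1] with t ht
      have hlt : 0 < Real.log t := Real.log_pos ht
      have hne := hlt.ne'
      simp only [hFdef]
      field_simp
      ring
    have hwii : ∀ a b : ℝ, 0 ≤ a → 0 ≤ b →
        IntervalIntegrable (fun s => (s/(r+s)^2) • (m s - γ)) volume a b := by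
      intro a b ha hb
      exact aux_ii r hr _ (hm.sub measurable_const) (Cb + ‖γ‖)
        (fun t => le_trans (norm_sub_le _ _) (by gcongr; exact hCb t)) a b ha hb
    have hsplit : ∀ t : ℝ, 0 ≤ t →
        (∫ s in (0:ℝ)..t, (s/(r+s)^2) • m s) = (F t - F 0) • γ + E t := by
      intro t ht
      have h2 : E t = (∫ s in (0:ℝ)..t, (s/(r+s)^2) • m s)
          - ∫ s in (0:ℝ)..t, (s/(r+s)^2) • γ := by
        rw [hEdef]
        simp only [smul_sub]
        exact intervalIntegral.integral_sub (aux_ii r hr m hm Cb hCb 0 t le_rfl ht)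
          ((ContinuousOn.intervalIntegrable (by
            apply ContinuousOn.smul (hfcOn.mono ?_) continuousOn_const
            intro x hx; exact le_trans (le_min le_rfl ht) hx.1)))
      have h3 : (∫ s in (0:ℝ)..t, (s/(r+s)^2) • γ)
          = (∫ s in (0:ℝ)..t, s/(r+s)^2) • γ := intervalIntegral.integral_smul_const _ _
      rw [h2, h3, hA 0 t le_rfl ht]
      abel
    have hE : Tendsto (fun t => (Real.log t)⁻¹ • E t) atTop (𝓝 0) := by
      rw [NormedAddCommGroup.tendsto_nhds_zero]
      intro ε hε
      obtain ⟨T₀, hT₀⟩ := Metric.tendsto_atTop.mp hlim (ε/4) (by positivity)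
      set T := max T₀ 1 with hTdef
      have hT1 : (1:ℝ) ≤ T := le_max_right _ _
      have hT0 : (0:ℝ) ≤ T := by linarith
      set K := ‖E T‖ with hKdef
      have hK0 : 0 ≤ K := norm_nonneg _
      have ev2 : ∀ᶠ t in atTop, (Real.log t)⁻¹ * K < ε/4 := by
        have h := hloginv.mul_const K
        rw [zero_mul] at h
        exact Tendsto.eventually_lt_const (by positivity) h
      have ev3 : ∀ᶠ t in atTop, (Real.log t)⁻¹ * (F t - F 0) < 2 :=
        Tendsto.eventually_lt_const (by norm_num) hlogA
      filter_upwards [eventually_ge_atTop (max T 2), ev2, ev3] with t ht h2 h3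
      have htT : T ≤ t := le_trans (le_max_left _ _) ht
      have ht2 : (2:ℝ) ≤ t := le_trans (le_max_right _ _) ht
      have hlogt : 0 < Real.log t := Real.log_pos (by linarith)
      have hinv0 : 0 ≤ (Real.log t)⁻¹ := inv_nonneg.mpr hlogt.le
      have hsplit2 : E t = E T + ∫ s in T..t, (s/(r+s)^2) • (m s - γ) := by
        rw [hEdef]
        exact (intervalIntegral.integral_add_adjacent_intervals (hwii 0 T le_rfl hT0)
          (hwii T t hT0 (by linarith))).symm
      have hFt : 0 ≤ F t - F T := hAnn T t hT0 htT
      have htail : ‖∫ s in T..t, (s/(r+s)^2) • (m s - γ)‖ ≤ (ε/4) * (F t - F T) := by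
        have hb : ‖∫ s in T..t, (s/(r+s)^2) • (m s - γ)‖
            ≤ |∫ s in T..t, (ε/4) * (s/(r+s)^2)| := by
          apply intervalIntegral.norm_integral_le_abs_of_norm_le ?_
            ((hfii T t hT0 (by linarith)).const_mul (ε/4))
          filter_upwards [ae_restrict_mem measurableSet_uIoc] with s hs
          rw [uIoc_of_le htT] at hs
          have hsT : T ≤ s := hs.1.le
          have hs0 : 0 < s := by linarith
          have hrs : 0 < r + s := by linarith
          have hms : ‖m s - γ‖ ≤ ε/4 := by
            have := hT₀ s (le_trans (le_max_left _ _) hsT)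
            rw [dist_eq_norm] at this
            exact this.le
          calc ‖(s/(r+s)^2) • (m s - γ)‖ = (s/(r+s)^2) * ‖m s - γ‖ := by
                rw [norm_smul, Real.norm_eq_abs, abs_of_nonneg (by positivity)]
            _ ≤ (s/(r+s)^2) * (ε/4) := mul_le_mul_of_nonneg_left hms (by positivity)
            _ = ε/4 * (s/(r+s)^2) := mul_comm _ _
        rwa [intervalIntegral.integral_const_mul, hA T t hT0 htT,
          abs_of_nonneg (by positivity)] at hb
      have hFT : F 0 ≤ F T := by linarith [hAnn 0 T le_rfl hT0]
      rw [norm_smul, Real.norm_eq_abs, abs_of_nonneg hinv0]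
      have hnorm : ‖E t‖ ≤ K + (ε/4)*(F t - F T) := by
        rw [hsplit2]
        exact le_trans (norm_add_le _ _) (add_le_add le_rfl htail)
      calc (Real.log t)⁻¹ * ‖E t‖ ≤ (Real.log t)⁻¹ * (K + (ε/4)*(F t - F T)) :=
            mul_le_mul_of_nonneg_left hnorm hinv0
        _ < ε := by
            have hint1 : (Real.log t)⁻¹ * (F t - F T) ≤ (Real.log t)⁻¹ * (F t - F 0) :=
              mul_le_mul_of_nonneg_left (by linarith) hinv0
            have h5 : (Real.log t)⁻¹ * (F t - F T) < 2 := lt_of_le_of_lt hint1 h3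
            have h6 : 0 ≤ (Real.log t)⁻¹ * (F t - F T) := mul_nonneg hinv0 hFt
            nlinarith [h2, h5, h6, hε]
    have t1 : Tendsto (fun t => (Real.log t)⁻¹ • μ0) atTop (𝓝 ((0:ℝ) • μ0)) :=
      hloginv.smul_const μ0
    have t2 : Tendsto (fun t => ((Real.log t)⁻¹ * (t/(r+t))) • m t) atTop
        (𝓝 (((0:ℝ)*1) • γ)) := (hloginv.mul hfrac).smul hlim
    have t3 : Tendsto (fun t => ((Real.log t)⁻¹ * (F t - F 0)) • γ) atTop (𝓝 ((1:ℝ) • γ)) :=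
      hlogA.smul_const γ
    have hsum := ((t1.add t2).add t3).add hE
    rw [show ((0:ℝ) • μ0 + ((0:ℝ)*1) • γ + (1:ℝ) • γ + 0) = γ by
      simp [zero_smul, one_smul]] at hsum
    apply hsum.congr'
    filter_upwards [eventually_ge_atTop 0] with t ht
    rw [hμ t, hsplit t ht]
    simp only [smul_add, smul_smul]
    abel
end
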